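/- Let f : ℝᵈ/ℤᵈ → ℝ be a periodic function with absolutely summable Fourier coefficients, let x̂ be any point of the torus, and let g₀ be any nonnegative periodic function with absolutely summable Fourier coefficients. If f⋆ denotes the minimum of f over the torus, then |f(x̂) − f⋆| ≤ ‖f − f(x̂) − g₀‖_F, where ‖u‖_F = Σ_{ω ∈ ℤᵈ} |û_ω| is the ℓ¹ norm of Fourier coefficients. -/

import Mathlib

/-!
Write `δ` for the coefficient sequence of the constant `f(xhat)`. The function
`h = f - f(xhat) - g₀` has Fourier coefficients `fc - δ - gc`, and every character has modulus one,
so `|h x| ≤ ‖fc - δ - gc‖_F` at every point. At a minimiser `xstar` of `f`, nonnegativity of `g₀`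
gives `0 ≤ f(xhat) - f(xstar) ≤ -h(xstar) ≤ |h(xstar)|`.
-/

open scoped BigOperators

section BoundedMultipliers

variable {ι : Type*} {c c' e : ι → ℂ}

lemma summable_norm_sub (hc : Summable (‖c ·‖)) (hc' : Summable (‖c' ·‖)) :
    Summable fun i => ‖c i - c' i‖ :=
  (hc.add hc').of_nonneg_of_le (fun _ => norm_nonneg _) fun _ => norm_sub_le _ _

lemma summable_mul_of_norm_le_one (hc : Summable (‖c ·‖)) (he : ∀ i, ‖e i‖ ≤ 1) :
    Summable fun i => c i * e i :=
  Summable.of_norm_bounded hc fun i => by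
    simpa [norm_mul] using mul_le_of_le_one_right (norm_nonneg (c i)) (he i)

lemma norm_tsum_mul_le_of_norm_le_one (hc : Summable (‖c ·‖)) (he : ∀ i, ‖e i‖ ≤ 1) :
    ‖∑' i, c i * e i‖ ≤ ∑' i, ‖c i‖ :=
  tsum_of_norm_bounded hc.hasSum fun i => by
    simpa [norm_mul] using mul_le_of_le_one_right (norm_nonneg (c i)) (he i)

lemma tsum_sub_mul_of_norm_le_one (hc : Summable (‖c ·‖)) (hc' : Summable (‖c' ·‖))
    (he : ∀ i, ‖e i‖ ≤ 1) :
    ∑' i, (c i - c' i) * e i = ∑' i, c i * e i - ∑' i, c' i * e i := by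
  simp only [sub_mul]
  exact (summable_mul_of_norm_le_one hc he).tsum_sub (summable_mul_of_norm_le_one hc' he)

end BoundedMultipliers

section TorusCharacter

variable {d : ℕ}

noncomputable def torusChar (ω : Fin d → ℤ) (x : Fin d → ℝ) : ℂ :=
  Complex.exp (2 * Real.pi * Complex.I * ∑ i, (ω i : ℂ) * (x i : ℂ))

lemma norm_torusChar (ω : Fin d → ℤ) (x : Fin d → ℝ) : ‖torusChar ω x‖ = 1 := by
  have h : 2 * Real.pi * Complex.I * ∑ i, (ω i : ℂ) * (x i : ℂ) =
      ((2 * Real.pi * ∑ i, (ω i : ℝ) * x i : ℝ) : ℂ) * Complex.I := by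
    push_cast
    ring
  rw [torusChar, h, Complex.norm_exp_ofReal_mul_I]

lemma torusChar_zero (x : Fin d → ℝ) : torusChar 0 x = 1 := by
  simp [torusChar]

lemma summable_norm_ite_eq_zero (a : ℂ) :
    Summable fun ω : Fin d → ℤ => ‖if ω = 0 then a else 0‖ :=
  summable_of_ne_finset_zero (s := {0}) fun ω hω => by
    simp [Finset.notMem_singleton.mp hω]

lemma tsum_ite_eq_zero_mul_torusChar (a : ℂ) (x : Fin d → ℝ) :
    ∑' ω : Fin d → ℤ, (if ω = 0 then a else 0) * torusChar ω x = a := by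
  rw [tsum_eq_single 0 fun ω hω => by simp [hω], if_pos rfl, torusChar_zero, mul_one]

lemma abs_le_tsum_norm_of_eq_tsum_torusChar {h : ℝ} {c : (Fin d → ℤ) → ℂ} {x : Fin d → ℝ}
    (hc : Summable (‖c ·‖)) (hh : (h : ℂ) = ∑' ω, c ω * torusChar ω x) :
    |h| ≤ ∑' ω, ‖c ω‖ := by
  rw [← Real.norm_eq_abs, ← Complex.norm_real, hh]
  exact norm_tsum_mul_le_of_norm_le_one hc fun ω => (norm_torusChar ω x).le

end TorusCharacter

theorem stmt0 {d : ℕ} (f : (Fin d → ℝ) → ℝ) (fc : (Fin d → ℤ) → ℂ)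
    (hf : ∀ x, (f x : ℂ) = ∑' ω : Fin d → ℤ, fc ω *
      Complex.exp (2 * Real.pi * Complex.I * ∑ i, (ω i : ℂ) * (x i : ℂ)))
    (hfsum : Summable fun ω => ‖fc ω‖)
    (g₀ : (Fin d → ℝ) → ℝ) (gc : (Fin d → ℤ) → ℂ)
    (hg : ∀ x, (g₀ x : ℂ) = ∑' ω : Fin d → ℤ, gc ω *
      Complex.exp (2 * Real.pi * Complex.I * ∑ i, (ω i : ℂ) * (x i : ℂ)))
    (hgsum : Summable fun ω => ‖gc ω‖)
    (hgnonneg : ∀ x, 0 ≤ g₀ x)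
    (xstar xhat : Fin d → ℝ) (hmin : ∀ x, f xstar ≤ f x) :
    |f xhat - f xstar| ≤
      ∑' ω : Fin d → ℤ, ‖fc ω - (if ω = 0 then (f xhat : ℂ) else 0) - gc ω‖ := by
  set δ : (Fin d → ℤ) → ℂ := fun ω => if ω = 0 then (f xhat : ℂ) else 0
  have hδsum : Summable (‖δ ·‖) := summable_norm_ite_eq_zero _
  have hchar : ∀ ω, ‖torusChar ω xstar‖ ≤ 1 := fun ω => (norm_torusChar ω xstar).le
  have hfδsum := summable_norm_sub hfsum hδsum
  have hexpand : ((f xstar - f xhat - g₀ xstar : ℝ) : ℂ) =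
      ∑' ω, (fc ω - δ ω - gc ω) * torusChar ω xstar := by
    rw [tsum_sub_mul_of_norm_le_one hfδsum hgsum hchar,
      tsum_sub_mul_of_norm_le_one hfsum hδsum hchar, tsum_ite_eq_zero_mul_torusChar]
    push_cast
    rw [hf xstar, hg xstar]
    rfl
  have hbound := abs_le_tsum_norm_of_eq_tsum_torusChar
    (summable_norm_sub hfδsum hgsum) hexpand
  rw [abs_of_nonneg (sub_nonneg.mpr (hmin xhat))]
  linarith [neg_abs_le (f xstar - f xhat - g₀ xstar), hgnonneg xstar]
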